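/- arXiv:2503.16933 — 2 statements merged into one kernel-verified Lean document; each statement's English description precedes it below -/
import Mathlib

section
/- Let S be an analytic 2-isometry on a complex Hilbert space H. With L_S := (S*S)⁻¹S*, P_S := I − S∘L_S, and D_S := (S*S − I)^{1/2} the positive square root, for every x ∈ H one has ‖x‖² = Σ_{k=0}^∞ ‖P_S L_S^k x‖² + Σ_{k=1}^∞ ‖D_S L_S^k x‖², both series converging. -/
/-!
Write `y = P y + S (L y)`. The two summands are orthogonal because `S* P = 0`, and
`‖S v‖² = ‖v‖² + ‖D v‖²`, so `‖y‖² = ‖P y‖² + ‖D L y‖² + ‖L y‖²`. Applied to `y = Lᵏ x` and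
telescoped, this gives `‖x‖² = Σ_{k<n} (‖P Lᵏ x‖² + ‖D Lᵏ⁺¹ x‖²) + ‖Lⁿ x‖²`, so everything comes
down to `‖Lⁿ x‖ → 0`.

The last identity shows that `L` is a contraction, so the positive operators `(Lⁿ)* Lⁿ` decrease
and converge strongly: `(Lⁿ)* Lⁿ x → W`. Since `Lⁿ Sⁿ = 1`, `‖Lⁿ x‖² = ⟪Sⁿ Lⁿ x, (Lⁿ)* Lⁿ x⟫`.
The vector `Sⁿ Lⁿ x` lies in the closed subspace `ran Sⁿ`, and it stays bounded for infinitely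
many `n`, because `‖Sⁿ v‖² = ‖v‖² + n ‖D v‖²` for a 2-isometry while `Σ ‖D Lⁿ x‖² < ∞`.
Analyticity makes the projection of `W` onto `ran Sⁿ` tend to zero, so the decreasing sequence
`‖Lⁿ x‖²` tends to zero.
-/

open ContinuousLinearMap Filter Topology RCLike
open scoped InnerProductSpace

section TwoIsometry

variable {𝕜 E : Type*} [NormedField 𝕜] [SeminormedAddCommGroup E] [NormedSpace 𝕜 E]

def IsTwoIsometry (S : E →L[𝕜] E) : Prop :=
  ∀ h : E, ‖S (S h)‖ ^ 2 - 2 * ‖S h‖ ^ 2 + ‖h‖ ^ 2 = 0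

theorem IsTwoIsometry.norm_pow_succ_apply_sq_sub {S : E →L[𝕜] E} (hS : IsTwoIsometry S)
    (n : ℕ) (v : E) : ‖(S ^ (n + 1)) v‖ ^ 2 - ‖(S ^ n) v‖ ^ 2 = ‖S v‖ ^ 2 - ‖v‖ ^ 2 := by
  induction n generalizing v with
  | zero => simp
  | succ n ih =>
    have h₁ : (S ^ (n + 1 + 1)) v = (S ^ (n + 1)) (S v) := by
      rw [pow_succ S (n + 1), mul_apply_eq_comp]
    have h₂ : (S ^ (n + 1)) v = (S ^ n) (S v) := by rw [pow_succ, mul_apply_eq_comp]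
    rw [h₁, h₂]
    linarith [ih (S v), hS v]

theorem IsTwoIsometry.norm_pow_apply_sq {S : E →L[𝕜] E} (hS : IsTwoIsometry S) (n : ℕ) (v : E) :
    ‖(S ^ n) v‖ ^ 2 = ‖v‖ ^ 2 + n * (‖S v‖ ^ 2 - ‖v‖ ^ 2) := by
  induction n with
  | zero => simp
  | succ n ih =>
    rw [Nat.cast_succ]
    linarith [hS.norm_pow_succ_apply_sq_sub n v]

theorem IsTwoIsometry.norm_le_norm_apply {S : E →L[𝕜] E} (hS : IsTwoIsometry S) (v : E) :
    ‖v‖ ≤ ‖S v‖ := by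
  by_contra! h
  have hgap : 0 < ‖v‖ ^ 2 - ‖S v‖ ^ 2 := by nlinarith [norm_nonneg (S v)]
  obtain ⟨n, hn⟩ := exists_nat_gt (‖v‖ ^ 2 / (‖v‖ ^ 2 - ‖S v‖ ^ 2))
  rw [div_lt_iff₀ hgap] at hn
  nlinarith [hS.norm_pow_apply_sq n v, sq_nonneg ‖(S ^ n) v‖]

theorem IsTwoIsometry.norm_le_norm_pow_apply {S : E →L[𝕜] E} (hS : IsTwoIsometry S) (n : ℕ)
    (v : E) : ‖v‖ ≤ ‖(S ^ n) v‖ := by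
  have hd : 0 ≤ ‖S v‖ ^ 2 - ‖v‖ ^ 2 :=
    sub_nonneg.mpr (pow_le_pow_left₀ (norm_nonneg v) (hS.norm_le_norm_apply v) 2)
  refine (sq_le_sq₀ (norm_nonneg _) (norm_nonneg _)).mp ?_
  rw [hS.norm_pow_apply_sq n v]
  linarith [mul_nonneg (Nat.cast_nonneg (α := ℝ) n) hd]

end TwoIsometry

theorem IsTwoIsometry.isClosed_range_pow {𝕜 E : Type*} [NontriviallyNormedField 𝕜]
    [NormedAddCommGroup E] [NormedSpace 𝕜 E] [CompleteSpace E] {S : E →L[𝕜] E}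
    (hS : IsTwoIsometry S) (n : ℕ) :
    IsClosed (LinearMap.range ((S ^ n : E →L[𝕜] E) : E →ₗ[𝕜] E) : Set E) := by
  rw [LinearMap.coe_range]
  refine ((S ^ n).antilipschitz_of_bound (K := 1) fun v => ?_).isClosed_range
    (S ^ n).uniformContinuous
  simpa using hS.norm_le_norm_pow_apply n v

theorem ContinuousLinearMap.antitone_range_pow {𝕜 E : Type*} [Semiring 𝕜] [TopologicalSpace E]
    [AddCommMonoid E] [Module 𝕜 E] (T : E →L[𝕜] E) :
    Antitone fun n : ℕ => LinearMap.range ((T ^ n : E →L[𝕜] E) : E →ₗ[𝕜] E) := by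
  rintro m n hmn _ ⟨y, rfl⟩
  refine ⟨(T ^ (n - m)) y, ?_⟩
  change (T ^ m) ((T ^ (n - m)) y) = (T ^ n) y
  rw [← mul_apply_eq_comp, ← pow_add, Nat.add_sub_cancel' hmn]

section Telescoping

variable {𝕜 E F G : Type*} [NormedField 𝕜] [SeminormedAddCommGroup E] [NormedSpace 𝕜 E]
  [SeminormedAddCommGroup F] [SeminormedAddCommGroup G] {L : E →L[𝕜] E} {P : E → F} {D : E → G}

theorem sum_range_add_norm_pow_apply_sq
    (hstep : ∀ y, ‖y‖ ^ 2 = ‖P y‖ ^ 2 + ‖D (L y)‖ ^ 2 + ‖L y‖ ^ 2) (x : E) (n : ℕ) :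
    ∑ k ∈ Finset.range n, (‖P ((L ^ k) x)‖ ^ 2 + ‖D ((L ^ (k + 1)) x)‖ ^ 2)
      + ‖(L ^ n) x‖ ^ 2 = ‖x‖ ^ 2 := by
  induction n with
  | zero => simp
  | succ n ih =>
    rw [Finset.sum_range_succ, ← ih, hstep ((L ^ n) x), pow_succ' L n, mul_apply_eq_comp]
    ring

theorem summable_norm_sq_of_norm_sq_eq
    (hstep : ∀ y, ‖y‖ ^ 2 = ‖P y‖ ^ 2 + ‖D (L y)‖ ^ 2 + ‖L y‖ ^ 2) (x : E) :
    Summable fun k => ‖P ((L ^ k) x)‖ ^ 2 + ‖D ((L ^ (k + 1)) x)‖ ^ 2 :=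
  summable_of_sum_range_le (c := ‖x‖ ^ 2) (fun k => by positivity) fun n => by
    linarith [sum_range_add_norm_pow_apply_sq hstep x n, sq_nonneg ‖(L ^ n) x‖]

theorem hasSum_norm_sq_of_norm_sq_eq
    (hstep : ∀ y, ‖y‖ ^ 2 = ‖P y‖ ^ 2 + ‖D (L y)‖ ^ 2 + ‖L y‖ ^ 2) (x : E)
    (hx : Tendsto (fun n => ‖(L ^ n) x‖ ^ 2) atTop (𝓝 0)) :
    HasSum (fun k => ‖P ((L ^ k) x)‖ ^ 2 + ‖D ((L ^ (k + 1)) x)‖ ^ 2) (‖x‖ ^ 2) := by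
  refine (hasSum_iff_tendsto_nat_of_nonneg (fun k => by positivity) _).mpr ?_
  have h := (tendsto_const_nhds (x := ‖x‖ ^ 2)).sub hx
  rw [sub_zero] at h
  exact h.congr fun n => by linarith [sum_range_add_norm_pow_apply_sq hstep x n]

theorem antitone_norm_pow_apply_sq_of_norm_sq_eq
    (hstep : ∀ y, ‖y‖ ^ 2 = ‖P y‖ ^ 2 + ‖D (L y)‖ ^ 2 + ‖L y‖ ^ 2) (x : E) :
    Antitone fun n => ‖(L ^ n) x‖ ^ 2 := antitone_nat_of_succ_le fun n => by
  rw [pow_succ' L n, mul_apply_eq_comp]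
  linarith [hstep ((L ^ n) x), sq_nonneg ‖P ((L ^ n) x)‖, sq_nonneg ‖D (L ((L ^ n) x))‖]

end Telescoping

theorem Summable.frequently_natCast_mul_le {a : ℕ → ℝ} (ha : Summable a) {c : ℝ} (hc : 0 < c) :
    ∃ᶠ n : ℕ in atTop, n * a n ≤ c := by
  by_contra! h
  refine Real.not_summable_natCast_inv (.of_norm_bounded_eventually_nat (ha.div_const c) ?_)
  filter_upwards [h, eventually_gt_atTop 0] with n hn hn₀
  have hn₀' : (0 : ℝ) < n := Nat.cast_pos.mpr hn₀
  rw [norm_inv, Real.norm_natCast, inv_le_iff_one_le_mul₀ hn₀', div_mul_eq_mul_div, le_div_iff₀ hc]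
  linarith

theorem tendsto_zero_of_antitone_of_frequently_le {f g : ℕ → ℝ} (hf : Antitone f)
    (hf₀ : ∀ n, 0 ≤ f n) (hg : Tendsto g atTop (𝓝 0)) (hfg : ∃ᶠ n in atTop, f n ≤ g n) :
    Tendsto f atTop (𝓝 0) := by
  have hlim := tendsto_atTop_ciInf hf ⟨0, Set.forall_mem_range.mpr hf₀⟩
  have hle : ⨅ n, f n ≤ 0 := le_of_tendsto_of_tendsto_of_frequently hlim hg hfg
  rwa [le_antisymm hle (le_ciInf hf₀)] at hlim

section Projection

variable {𝕜 E : Type*} [RCLike 𝕜] [NormedAddCommGroup E] [InnerProductSpace 𝕜 E]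

theorem Submodule.tendsto_starProjection_zero_of_antitone {ι : Type*} [Preorder ι]
    [CompleteSpace E] {K : ι → Submodule 𝕜 E} [∀ i, (K i).HasOrthogonalProjection] (hK : Antitone K)
    (hK_bot : ⨅ i, K i = ⊥) (x : E) :
    Tendsto (fun i => (K i).starProjection x) atTop (𝓝 0) := by
  have hdense : ⊤ ≤ (⨆ i, (K i)ᗮ).topologicalClosure := by
    rw [← orthogonal_orthogonal_eq_closure, ← iInf_orthogonal]
    simp_rw [orthogonal_orthogonal, hK_bot, bot_orthogonal_eq_top, le_refl]
  have h := starProjection_tendsto_self (fun i => (K i)ᗮ) (fun i j hij => orthogonal_le (hK hij))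
    x hdense
  simpa using h.const_sub x

theorem re_inner_le_norm_mul_of_mem {K : Submodule 𝕜 E} [K.HasOrthogonalProjection] {u : E}
    (hu : u ∈ K) (w W : E) :
    re ⟪u, w⟫_𝕜 ≤ ‖u‖ * (‖K.starProjection W‖ + ‖w - W‖) := by
  have hW : ⟪u, W⟫_𝕜 = ⟪u, K.starProjection W⟫_𝕜 := by
    rw [← Submodule.inner_starProjection_left_eq_right, Submodule.starProjection_eq_self_iff.mpr hu]
  calc re ⟪u, w⟫_𝕜 = re ⟪u, K.starProjection W⟫_𝕜 + re ⟪u, w - W⟫_𝕜 := by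
        rw [inner_sub_right, hW, map_sub]; ring
    _ ≤ ‖u‖ * ‖K.starProjection W‖ + ‖u‖ * ‖w - W‖ :=
        add_le_add (re_inner_le_norm _ _) (re_inner_le_norm _ _)
    _ = ‖u‖ * (‖K.starProjection W‖ + ‖w - W‖) := by ring

end Projection

section Hilbert

variable {H : Type*} [NormedAddCommGroup H] [InnerProductSpace ℂ H] [CompleteSpace H]

theorem ContinuousLinearMap.norm_apply_sq_le_of_nonneg {T : H →L[ℂ] H} (hT : 0 ≤ T) (v : H) :
    ‖T v‖ ^ 2 ≤ ‖T‖ * re ⟪T v, v⟫_ℂ := by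
  obtain ⟨B, rfl⟩ := CStarAlgebra.nonneg_iff_eq_star_mul_self.mp hT
  have hinner : re ⟪(star B * B) v, v⟫_ℂ = ‖B v‖ ^ 2 := by
    rw [star_eq_adjoint, mul_apply_eq_comp, adjoint_inner_left, inner_self_eq_norm_sq]
  rw [CStarRing.norm_star_mul_self, hinner, ← sq, ← mul_pow]
  gcongr
  calc ‖(star B * B) v‖ = ‖star B (B v)‖ := rfl
    _ ≤ ‖star B‖ * ‖B v‖ := le_opNorm _ _
    _ = ‖B‖ * ‖B v‖ := by rw [norm_star]

theorem ContinuousLinearMap.cauchySeq_apply_of_antitone {T : ℕ → H →L[ℂ] H} (hT : Antitone T)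
    (hT₀ : ∀ n, 0 ≤ T n) (x : H) : CauchySeq fun n => T n x := by
  set a : ℕ → ℝ := fun n => re ⟪T n x, x⟫_ℂ
  have ha : Antitone a := fun m n hmn => sub_nonneg.mp <| by
    simpa [a, inner_sub_left] using ((le_def _ _).mp (hT hmn)).re_inner_nonneg_left x
  have ha₀ : ∀ n, 0 ≤ a n := fun n => ((nonneg_iff_isPositive _).mp (hT₀ n)).re_inner_nonneg_left x
  have hac : CauchySeq a := (tendsto_atTop_ciInf ha ⟨0, Set.forall_mem_range.mpr ha₀⟩).cauchySeq
  have hdist : ∀ m n, m ≤ n → dist (T n x) (T m x) ^ 2 ≤ ‖T 0‖ * (a m - a n) := by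
    intro m n hmn
    have hsub : 0 ≤ T m - T n := sub_nonneg.mpr (hT hmn)
    have hnorm : ‖T m - T n‖ ≤ ‖T 0‖ :=
      (CStarAlgebra.norm_le_norm_of_nonneg_of_le hsub (sub_le_self _ (hT₀ n))).trans
        (CStarAlgebra.norm_le_norm_of_nonneg_of_le (hT₀ m) (hT (Nat.zero_le m)))
    calc dist (T n x) (T m x) ^ 2 = ‖(T m - T n) x‖ ^ 2 := by rw [dist_eq_norm', sub_apply]
      _ ≤ ‖T m - T n‖ * re ⟪(T m - T n) x, x⟫_ℂ := norm_apply_sq_le_of_nonneg hsub x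
      _ ≤ ‖T 0‖ * (a m - a n) := by
          rw [sub_apply, inner_sub_left, map_sub]
          exact mul_le_mul_of_nonneg_right hnorm (sub_nonneg.mpr (ha hmn))
  refine Metric.cauchySeq_iff'.mpr fun ε hε => ?_
  obtain ⟨N, hN⟩ := Metric.cauchySeq_iff'.mp hac (ε ^ 2 / (‖T 0‖ + 1)) (by positivity)
  refine ⟨N, fun n hn => ?_⟩
  have hgap := hN n hn
  rw [Real.dist_eq, abs_sub_comm, abs_of_nonneg (sub_nonneg.mpr (ha hn))] at hgap
  refine lt_of_pow_lt_pow_left₀ 2 hε.le ?_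
  calc dist (T n x) (T N x) ^ 2 ≤ ‖T 0‖ * (a N - a n) := hdist N n hn
    _ ≤ (‖T 0‖ + 1) * (a N - a n) := by gcongr; exacts [sub_nonneg.mpr (ha hn), by linarith]
    _ < (‖T 0‖ + 1) * (ε ^ 2 / (‖T 0‖ + 1)) := by gcongr
    _ = ε ^ 2 := by field_simp

theorem ContinuousLinearMap.antitone_star_pow_mul_pow {L : H →L[ℂ] H} (hL : ‖L‖ ≤ 1) :
    Antitone fun n : ℕ => star (L ^ n) * L ^ n := by
  have hLL : star L * L ≤ 1 :=
    calc star L * L ≤ algebraMap ℝ (H →L[ℂ] H) (‖L‖ ^ 2) :=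
          CStarAlgebra.star_mul_le_algebraMap_norm_sq
      _ ≤ algebraMap ℝ (H →L[ℂ] H) 1 := by gcongr; exact pow_le_one₀ (norm_nonneg L) hL
      _ = 1 := map_one _
  refine antitone_nat_of_succ_le fun n => ?_
  calc star (L ^ (n + 1)) * L ^ (n + 1) = star (L ^ n) * (star L * L) * L ^ n := by
        rw [pow_succ', star_mul]; noncomm_ring
    _ ≤ star (L ^ n) * 1 * L ^ n := star_left_conjugate_le_conjugate hLL _
    _ = star (L ^ n) * L ^ n := by rw [mul_one]

theorem inner_pow_apply_star_pow_mul_pow {A B : H →L[ℂ] H} (hAB : A * B = 1) (n : ℕ) (y x : H) :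
    ⟪(B ^ n) y, (star (A ^ n) * A ^ n) x⟫_ℂ = ⟪y, (A ^ n) x⟫_ℂ := by
  rw [mul_apply_eq_comp, star_eq_adjoint, adjoint_inner_right, ← mul_apply_eq_comp,
    pow_mul_pow_eq_one n hAB, one_apply_eq_self]

variable {S D L : H →L[ℂ] H}

theorem norm_apply_sq_eq_add_norm_sq (hD : adjoint D ∘L D = adjoint S ∘L S - 1) (v : H) :
    ‖S v‖ ^ 2 = ‖v‖ ^ 2 + ‖D v‖ ^ 2 := by
  have h := congrArg (fun T : H →L[ℂ] H => re ⟪T v, v⟫_ℂ) hD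
  simp only [comp_apply, sub_apply, one_apply_eq_self, adjoint_inner_left, inner_sub_left,
    map_sub, inner_self_eq_norm_sq] at h
  linarith

theorem norm_sq_eq_norm_sq_add_norm_apply_sq (hSL : adjoint S ∘L S ∘L L = adjoint S) (y : H) :
    ‖y‖ ^ 2 = ‖(1 - S ∘L L) y‖ ^ 2 + ‖S (L y)‖ ^ 2 := by
  have hker : adjoint S ((1 - S ∘L L) y) = 0 := by
    have h := congrArg (· y) hSL
    simp only [comp_apply] at h
    simp [h]
  have horth : ⟪(1 - S ∘L L) y, S (L y)⟫_ℂ = 0 := by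
    rw [← adjoint_inner_left, hker, inner_zero_left]
  calc ‖y‖ ^ 2 = ‖(1 - S ∘L L) y + S (L y)‖ ^ 2 := by simp
    _ = ‖(1 - S ∘L L) y‖ ^ 2 + ‖S (L y)‖ ^ 2 := by
        rw [sq, sq, sq, norm_add_sq_eq_norm_sq_add_norm_sq_of_inner_eq_zero _ _ horth]

theorem norm_sq_eq_add_norm_defect_sq_add_norm_apply_sq
    (hD : adjoint D ∘L D = adjoint S ∘L S - 1) (hSL : adjoint S ∘L S ∘L L = adjoint S) (y : H) :
    ‖y‖ ^ 2 = ‖(1 - S ∘L L) y‖ ^ 2 + ‖D (L y)‖ ^ 2 + ‖L y‖ ^ 2 := by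
  rw [norm_sq_eq_norm_sq_add_norm_apply_sq hSL y, norm_apply_sq_eq_add_norm_sq hD]
  ring

theorem IsTwoIsometry.tendsto_norm_pow_apply_sq_zero (hS : IsTwoIsometry S)
    (hanalytic : ⨅ n : ℕ, LinearMap.range ((S ^ n : H →L[ℂ] H) : H →ₗ[ℂ] H) = ⊥)
    (hD : adjoint D ∘L D = adjoint S ∘L S - 1) (hLS : L * S = 1)
    (hSL : adjoint S ∘L S ∘L L = adjoint S) (x : H) :
    Tendsto (fun n => ‖(L ^ n) x‖ ^ 2) atTop (𝓝 0) := by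
  have hstep := norm_sq_eq_add_norm_defect_sq_add_norm_apply_sq hD hSL
  have hL : ‖L‖ ≤ 1 := opNorm_le_bound _ zero_le_one fun y => by
    have h : ‖(L ^ 1) y‖ ^ 2 ≤ ‖(L ^ 0) y‖ ^ 2 :=
      antitone_norm_pow_apply_sq_of_norm_sq_eq hstep y zero_le_one
    rwa [pow_zero, pow_one, one_apply_eq_self, sq_le_sq₀ (norm_nonneg _) (norm_nonneg _),
      ← one_mul ‖y‖] at h
  have hy := antitone_norm_pow_apply_sq_of_norm_sq_eq hstep x
  have hDsum : Summable fun n => ‖D ((L ^ n) x)‖ ^ 2 :=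
    (summable_nat_add_iff 1).mp <| (summable_norm_sq_of_norm_sq_eq hstep x).of_nonneg_of_le
      (fun _ => by positivity) fun _ => le_add_of_nonneg_left (by positivity)
  obtain ⟨W, hW⟩ := cauchySeq_tendsto_of_complete <|
    cauchySeq_apply_of_antitone (antitone_star_pow_mul_pow hL) (fun n => star_mul_self_nonneg _) x
  set K := fun n : ℕ => LinearMap.range ((S ^ n : H →L[ℂ] H) : H →ₗ[ℂ] H)
  have hK : ∀ n, (K n).HasOrthogonalProjection := fun n => by
    have := (hS.isClosed_range_pow n).completeSpace_coe
    infer_instance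
  have hQ := Submodule.tendsto_starProjection_zero_of_antitone S.antitone_range_pow hanalytic W
  set M := √(‖x‖ ^ 2 + 1)
  refine tendsto_zero_of_antitone_of_frequently_le hy (fun n => by positivity)
    (g := fun n => M * (‖(K n).starProjection W‖ + ‖(star (L ^ n) * L ^ n) x - W‖)) ?_ ?_
  · have h := (hQ.norm.add (hW.sub_const W).norm).const_mul M
    rwa [norm_zero, sub_self, norm_zero, add_zero, mul_zero] at h
  refine (hDsum.frequently_natCast_mul_le one_pos).mono fun n hn => ?_
  have hu : ‖(S ^ n) ((L ^ n) x)‖ ≤ M := by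
    refine Real.le_sqrt_of_sq_le ?_
    rw [hS.norm_pow_apply_sq, norm_apply_sq_eq_add_norm_sq hD]
    have := hy (Nat.zero_le n)
    simp only [pow_zero, one_apply_eq_self] at this
    linarith
  calc ‖(L ^ n) x‖ ^ 2 = re ⟪(S ^ n) ((L ^ n) x), (star (L ^ n) * L ^ n) x⟫_ℂ := by
        rw [inner_pow_apply_star_pow_mul_pow hLS, inner_self_eq_norm_sq]
    _ ≤ ‖(S ^ n) ((L ^ n) x)‖ * (‖(K n).starProjection W‖ + ‖(star (L ^ n) * L ^ n) x - W‖) :=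
        re_inner_le_norm_mul_of_mem (LinearMap.mem_range_self _ _) _ _
    _ ≤ M * (‖(K n).starProjection W‖ + ‖(star (L ^ n) * L ^ n) x - W‖) := by gcongr

end Hilbert

/-- **Richter's norm identity.** For an analytic 2-isometry `S`,
with `L_S = (S*S)⁻¹S*`, `P_S = I − S L_S` and `D_S = (S*S − I)^{1/2}`, one has
`‖x‖² = Σ_{k≥0} ‖P_S L_S^k x‖² + Σ_{k≥1} ‖D_S L_S^k x‖²` for all `x`. -/
theorem analytic_twoIsometry_norm_identity
    {H : Type*} [NormedAddCommGroup H] [InnerProductSpace ℂ H] [CompleteSpace H]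
    (S : H →L[ℂ] H)
    (h2iso : ∀ h : H, ‖S (S h)‖ ^ 2 - 2 * ‖S h‖ ^ 2 + ‖h‖ ^ 2 = 0)
    (hanalytic : (⨅ n : ℕ, LinearMap.range ((S ^ n : H →L[ℂ] H) : H →ₗ[ℂ] H)) = ⊥)
    (R : H →L[ℂ] H)
    (hR1 : R ∘L (adjoint S ∘L S) = 1) (hR2 : (adjoint S ∘L S) ∘L R = 1)
    (D : H →L[ℂ] H) (hDpos : D.IsPositive) (hDsq : D ∘L D = adjoint S ∘L S - 1) :
    ∀ L P : H →L[ℂ] H, L = R ∘L adjoint S → P = 1 - S ∘L L →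
      ∀ x : H,
        Summable (fun k : ℕ => ‖P ((L ^ k) x)‖ ^ 2) ∧
        Summable (fun k : ℕ => ‖D ((L ^ (k + 1)) x)‖ ^ 2) ∧
        ‖x‖ ^ 2 = (∑' k : ℕ, ‖P ((L ^ k) x)‖ ^ 2)
          + ∑' k : ℕ, ‖D ((L ^ (k + 1)) x)‖ ^ 2 := by
  rintro L P rfl rfl x
  have hD : adjoint D ∘L D = adjoint S ∘L S - 1 := by rw [hDpos.isSelfAdjoint.adjoint_eq, hDsq]
  have hSL : adjoint S ∘L S ∘L R ∘L adjoint S = adjoint S := by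
    rw [← comp_assoc, ← comp_assoc, hR2]; rfl
  have hsum := hasSum_norm_sq_of_norm_sq_eq
    (norm_sq_eq_add_norm_defect_sq_add_norm_apply_sq hD hSL) x
    (IsTwoIsometry.tendsto_norm_pow_apply_sq_zero h2iso hanalytic hD hR1 hSL x)
  have hP := hsum.summable.of_nonneg_of_le (fun _ => by positivity)
    fun _ => le_add_of_nonneg_right (by positivity)
  have hDs := hsum.summable.of_nonneg_of_le (fun _ => by positivity)
    fun _ => le_add_of_nonneg_left (by positivity)
  exact ⟨hP, hDs, by rw [← hP.tsum_add hDs, hsum.tsum_eq]⟩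
end

section
/- Two-variable wandering subspace property: let (T₁, T₂) be a pair of doubly commuting analytic 2-isometries on a complex Hilbert space H. Then H equals the closed linear span of ⋃_{m≥0, n≥0} T₁^m T₂ⁿ(E), where E := ker T₁* ∩ ker T₂*. -/
open ContinuousLinearMap

/-!
Single operator (Richter): let `x ⊥ Tⁿ (ker T*)` for all `n`. A 2-isometry is bounded below, so
`range T` is closed and `H = range T ⊕ ker T*`; peeling off repeatedly gives `y₀ = x` and
`yₖ = T yₖ₊₁ + eₖ` with `eₖ ∈ ker T*`. Then `x - Tⁿ yₙ = ∑ₖ Tᵏ eₖ ⊥ x`, and the 2-isometry identity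
`‖Tⁿ y‖² = ‖y‖² + n (‖T y‖² - ‖y‖²)` together with `‖yₙ‖ ≤ ‖x‖` yields `‖x - Tⁿ yₙ‖² ≤ n qₙ`, where
`qₙ = ‖T yₙ‖² - ‖yₙ‖² ≥ 0` telescopes to a summable sequence. So `n qₙ` is small for infinitely many
`n`, which puts `x` in every closed subspace `range Tᵐ`, and analyticity forces `x = 0`.

Pair: double commutativity makes `ker T₂*` reducing for `T₁`, and the restriction of `T₁` to it
is an analytic 2-isometry whose adjoint has kernel `ker T₁* ∩ ker T₂*`. The single-operator result
for this restriction spans `ker T₂*` by the `T₁ᵐ E`, and for `T₂` it spans `H` by the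
`T₂ⁿ (ker T₂*)`.
-/

theorem summable_of_le_sub_succ {b q : ℕ → ℝ} (hb : ∀ n, 0 ≤ b n) (hq : ∀ n, 0 ≤ q n)
    (h : ∀ n, q (n + 1) ≤ b n - b (n + 1)) : Summable q := by
  have hsum : ∀ n, ∑ k ∈ Finset.range n, q (k + 1) + b n ≤ b 0 := by
    intro n
    induction n with
    | zero => simp
    | succ n ih => rw [Finset.sum_range_succ]; linarith [h n]
  exact (summable_nat_add_iff 1).mp <|
    summable_of_sum_range_le (fun n => hq _) fun n => by linarith [hsum n, hb n]

open Filter in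
theorem Summable.frequently_natCast_mul_lt {q : ℕ → ℝ} (hq : Summable q) {ε : ℝ} (hε : 0 < ε) :
    ∃ᶠ n : ℕ in atTop, (n : ℝ) * q n < ε := by
  by_contra h
  rw [not_frequently] at h
  refine Real.not_summable_natCast_inv <| (summable_mul_left_iff hε.ne').mp <|
    hq.of_norm_bounded_eventually ?_
  rw [Nat.cofinite_eq_atTop]
  filter_upwards [h, eventually_gt_atTop 0] with n hn hpos
  have hpos : (0 : ℝ) < n := Nat.cast_pos.mpr hpos
  rw [Real.norm_of_nonneg (by positivity), ← div_eq_mul_inv, div_le_iff₀ hpos]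
  linarith

namespace ContinuousLinearMap

section Normed

variable {𝕜 E : Type*} [NontriviallyNormedField 𝕜] [NormedAddCommGroup E] [NormedSpace 𝕜 E]

def IsTwoIsometry (T : E →L[𝕜] E) : Prop :=
  ∀ h : E, ‖T (T h)‖ ^ 2 - 2 * ‖T h‖ ^ 2 + ‖h‖ ^ 2 = 0

def IsAnalytic (T : E →L[𝕜] E) : Prop :=
  (⨅ n : ℕ, LinearMap.range ((T ^ n : E →L[𝕜] E) : E →ₗ[𝕜] E)) = ⊥

theorem pow_succ_apply (T : E →L[𝕜] E) (n : ℕ) (h : E) : (T ^ (n + 1)) h = T ((T ^ n) h) := by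
  rw [pow_succ', mul_apply_eq_comp]

theorem pow_succ_apply' (T : E →L[𝕜] E) (n : ℕ) (h : E) : (T ^ (n + 1)) h = (T ^ n) (T h) := by
  rw [pow_succ, mul_apply_eq_comp]

variable {T : E →L[𝕜] E}

theorem IsTwoIsometry.norm_sq_pow_apply (hT : T.IsTwoIsometry) (h : E) (n : ℕ) :
    ‖(T ^ n) h‖ ^ 2 = ‖h‖ ^ 2 + n * (‖T h‖ ^ 2 - ‖h‖ ^ 2) := by
  suffices ∀ n : ℕ, ‖(T ^ n) h‖ ^ 2 = ‖h‖ ^ 2 + n * (‖T h‖ ^ 2 - ‖h‖ ^ 2) ∧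
      ‖(T ^ (n + 1)) h‖ ^ 2 = ‖h‖ ^ 2 + (n + 1) * (‖T h‖ ^ 2 - ‖h‖ ^ 2) from (this n).1
  intro n
  induction n with
  | zero => simp
  | succ n ih =>
    refine ⟨by simpa using ih.2, ?_⟩
    have := hT ((T ^ n) h)
    rw [← pow_succ_apply, ← pow_succ_apply] at this
    rw [Nat.cast_succ]
    linarith [ih.1, ih.2]

theorem IsTwoIsometry.norm_le_norm_apply (hT : T.IsTwoIsometry) (h : E) : ‖h‖ ≤ ‖T h‖ := by
  rw [← sq_le_sq₀ (norm_nonneg _) (norm_nonneg _)]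
  by_contra! hlt
  obtain ⟨n, hn⟩ := exists_nat_gt (‖h‖ ^ 2 / (‖h‖ ^ 2 - ‖T h‖ ^ 2))
  have := hT.norm_sq_pow_apply h n
  rw [div_lt_iff₀ (by linarith)] at hn
  nlinarith [sq_nonneg ‖(T ^ n) h‖]

theorem IsTwoIsometry.norm_le_norm_pow_apply (hT : T.IsTwoIsometry) (n : ℕ) (h : E) :
    ‖h‖ ≤ ‖(T ^ n) h‖ := by
  induction n with
  | zero => simp
  | succ n ih => exact ih.trans (pow_succ_apply T n h ▸ hT.norm_le_norm_apply _)

theorem IsTwoIsometry.isClosed_range_pow [CompleteSpace E] (hT : T.IsTwoIsometry) (n : ℕ) :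
    IsClosed (Set.range (T ^ n)) :=
  ((T ^ n).antilipschitz_of_bound (K := 1) fun h => by
    simpa using hT.norm_le_norm_pow_apply n h).isClosed_range (T ^ n).uniformContinuous

theorem coe_pow_restrict_apply {p : Submodule 𝕜 E} (hp : ∀ x ∈ p, T x ∈ p) (n : ℕ) (x : p) :
    (((T.restrict hp) ^ n) x : E) = (T ^ n) x := by
  induction n with
  | zero => rfl
  | succ n ih => rw [pow_succ_apply, pow_succ_apply, coe_restrict_apply, ih]

theorem IsTwoIsometry.restrict (hT : T.IsTwoIsometry) {p : Submodule 𝕜 E}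
    (hp : ∀ x ∈ p, T x ∈ p) : (T.restrict hp).IsTwoIsometry :=
  fun x => hT x

theorem IsAnalytic.restrict (hT : T.IsAnalytic) {p : Submodule 𝕜 E} (hp : ∀ x ∈ p, T x ∈ p) :
    (T.restrict hp).IsAnalytic := by
  refine eq_bot_iff.mpr fun x hx => ?_
  have hxT : (x : E) ∈ ⨅ n : ℕ, LinearMap.range ((T ^ n : E →L[𝕜] E) : E →ₗ[𝕜] E) :=
    Submodule.mem_iInf _ |>.mpr fun n => by
      obtain ⟨u, hu⟩ := Submodule.mem_iInf _ |>.mp hx n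
      exact ⟨u, by rw [coe_coe, ← coe_pow_restrict_apply hp]; exact congrArg Subtype.val hu⟩
  unfold IsAnalytic at hT
  rw [hT, Submodule.mem_bot] at hxT
  exact (Submodule.mem_bot 𝕜).mpr (Subtype.ext hxT)

end Normed

section Hilbert

open scoped InnerProductSpace InnerProduct

variable {𝕜 H : Type*} [RCLike 𝕜] [NormedAddCommGroup H] [InnerProductSpace 𝕜 H] [CompleteSpace H]
  {T : H →L[𝕜] H}

theorem exists_seq_sub_apply_succ_mem_ker_adjoint (hT : IsClosed (Set.range T)) (x : H) :
    ∃ y : ℕ → H, y 0 = x ∧ ∀ k, y k - T (y (k + 1)) ∈ (T†).ker := by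
  have : ∀ z : H, ∃ u, z - T u ∈ (T†).ker := by
    intro z
    have : CompleteSpace T.range := hT.completeSpace_coe
    obtain ⟨_, ⟨u, rfl⟩, e, he, rfl⟩ := T.range.exists_add_mem_mem_orthogonal z
    rw [T.orthogonal_range] at he
    exact ⟨u, by rwa [coe_coe, add_sub_cancel_left]⟩
  choose f hf using this
  exact ⟨fun n => f^[n] x, rfl, fun k => by simpa only [Function.iterate_succ_apply'] using hf _⟩

theorem norm_apply_le_of_sub_mem_ker_adjoint {z u : H} (h : z - T u ∈ (T†).ker) :
    ‖T u‖ ≤ ‖z‖ := by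
  have horth : ⟪T u, z - T u⟫_𝕜 = 0 := by
    rw [← adjoint_inner_right, show (T†) (z - T u) = 0 from h, inner_zero_right]
  have := norm_add_sq_eq_norm_sq_add_norm_sq_of_inner_eq_zero _ _ horth
  rw [add_sub_cancel] at this
  exact (mul_self_le_mul_self_iff (norm_nonneg _) (norm_nonneg _)).mpr
    (by nlinarith [mul_self_nonneg ‖z - T u‖])

theorem sub_pow_apply_mem_iSup_map_pow_ker_adjoint {y : ℕ → H}
    (hy : ∀ k, y k - T (y (k + 1)) ∈ (T†).ker) (n : ℕ) :
    y 0 - (T ^ n) (y n) ∈ ⨆ k : ℕ, (T†).ker.map ((T ^ k : H →L[𝕜] H) : H →ₗ[𝕜] H) := by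
  induction n with
  | zero => simp
  | succ n ih =>
    have hn : (T ^ n) (y n - T (y (n + 1))) ∈
        ⨆ k : ℕ, (T†).ker.map ((T ^ k : H →L[𝕜] H) : H →ₗ[𝕜] H) :=
      Submodule.mem_iSup_of_mem n (Submodule.mem_map_of_mem (hy n))
    rw [map_sub, ← pow_succ_apply'] at hn
    simpa only [sub_add_sub_cancel] using add_mem ih hn

theorem IsTwoIsometry.orthogonal_iSup_map_pow_ker_adjoint_le_range_pow (hT : T.IsTwoIsometry)
    (m : ℕ) : (⨆ n : ℕ, (T†).ker.map ((T ^ n : H →L[𝕜] H) : H →ₗ[𝕜] H))ᗮ ≤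
      ((T ^ m : H →L[𝕜] H) : H →ₗ[𝕜] H).range := by
  intro x hx
  obtain ⟨y, rfl, hy⟩ :=
    exists_seq_sub_apply_succ_mem_ker_adjoint (by simpa using hT.isClosed_range_pow 1) x
  have hq : ∀ n, 0 ≤ ‖T (y n)‖ ^ 2 - ‖y n‖ ^ 2 := fun n => by
    nlinarith [hT.norm_le_norm_apply (y n), norm_nonneg (y n)]
  have hstep : ∀ n, ‖T (y (n + 1))‖ ^ 2 ≤ ‖y n‖ ^ 2 := fun n =>
    pow_le_pow_left₀ (norm_nonneg _) (norm_apply_le_of_sub_mem_ker_adjoint (hy n)) 2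
  have hanti : Antitone fun n => ‖y n‖ ^ 2 :=
    antitone_nat_of_succ_le fun n => by linarith [hstep n, hq (n + 1)]
  have hsum : Summable fun n => ‖T (y n)‖ ^ 2 - ‖y n‖ ^ 2 :=
    summable_of_le_sub_succ (b := fun n => ‖y n‖ ^ 2) (fun n => sq_nonneg _) hq fun n => by
      linarith [hstep n]
  have hdist : ∀ n : ℕ, ‖y 0 - (T ^ n) (y n)‖ ^ 2 ≤ n * (‖T (y n)‖ ^ 2 - ‖y n‖ ^ 2) := by
    intro n
    have horth : ⟪y 0, (T ^ n) (y n) - y 0⟫_𝕜 = 0 := by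
      rw [← neg_sub, inner_neg_right, Submodule.inner_left_of_mem_orthogonal
        (sub_pow_apply_mem_iSup_map_pow_ker_adjoint hy n) hx, neg_zero]
    have hpyth := norm_add_sq_eq_norm_sq_add_norm_sq_of_inner_eq_zero _ _ horth
    rw [add_sub_cancel, norm_sub_rev] at hpyth
    nlinarith [hT.norm_sq_pow_apply (y n) n, hanti (Nat.zero_le n)]
  show y 0 ∈ Set.range (T ^ m)
  refine (hT.isClosed_range_pow m).closure_subset (Metric.mem_closure_iff.mpr fun ε hε => ?_)
  obtain ⟨n, hn, hmn⟩ := ((hsum.frequently_natCast_mul_lt (pow_pos hε 2)).and_eventually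
    (Filter.eventually_ge_atTop m)).exists
  refine ⟨(T ^ n) (y n), ⟨(T ^ (n - m)) (y n), ?_⟩, ?_⟩
  · rw [← mul_apply_eq_comp, ← pow_add, Nat.add_sub_cancel' hmn]
  · rw [dist_eq_norm]
    exact lt_of_pow_lt_pow_left₀ 2 hε.le ((hdist n).trans_lt hn)

theorem IsTwoIsometry.topologicalClosure_iSup_map_pow_ker_adjoint_eq_top (hT : T.IsTwoIsometry)
    (hana : T.IsAnalytic) :
    (⨆ n : ℕ, (T†).ker.map ((T ^ n : H →L[𝕜] H) : H →ₗ[𝕜] H)).topologicalClosure = ⊤ := by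
  rw [Submodule.topologicalClosure_eq_top_iff, eq_bot_iff, ← hana]
  exact le_iInf hT.orthogonal_iSup_map_pow_ker_adjoint_le_range_pow

theorem adjoint_restrict {p : Submodule 𝕜 H} [CompleteSpace p] (hp : ∀ x ∈ p, T x ∈ p)
    (hp' : ∀ x ∈ p, (T†) x ∈ p) : (T.restrict hp)† = (T†).restrict hp' := by
  refine ((eq_adjoint_iff _ _).mpr fun x y => ?_).symm
  simp only [Submodule.coe_inner, coe_restrict_apply, adjoint_inner_left]

theorem IsTwoIsometry.le_topologicalClosure_iSup_map_pow_ker_adjoint_inf (hT : T.IsTwoIsometry)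
    (hana : T.IsAnalytic) {p : Submodule 𝕜 H} (hpc : IsClosed (p : Set H))
    (hp : ∀ x ∈ p, T x ∈ p) (hp' : ∀ x ∈ p, (T†) x ∈ p) :
    p ≤ (⨆ n : ℕ, ((T†).ker ⊓ p).map ((T ^ n : H →L[𝕜] H) : H →ₗ[𝕜] H)).topologicalClosure := by
  have : CompleteSpace p := hpc.completeSpace_coe
  have htop :=
    (hT.restrict hp).topologicalClosure_iSup_map_pow_ker_adjoint_eq_top (hana.restrict hp)
  intro x hx
  have hx' : (⟨x, hx⟩ : p) ∈ _ := htop ▸ Submodule.mem_top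
  refine Submodule.topologicalClosure_mono ?_
    (Submodule.topologicalClosure_map p.subtypeL _ ⟨_, hx', rfl⟩)
  rw [Submodule.map_iSup]
  refine iSup_mono fun n => ?_
  rintro _ ⟨_, ⟨u, hu, rfl⟩, rfl⟩
  refine ⟨u, ⟨?_, u.2⟩, (coe_pow_restrict_apply hp n u).symm⟩
  rw [adjoint_restrict hp hp'] at hu
  exact congrArg Subtype.val hu

end Hilbert

end ContinuousLinearMap

/-- **two-variable wandering subspace property.** For a doubly
commuting pair of analytic 2-isometries `(T₁, T₂)`, the Hilbert space equals the
closed span of `⋃_{m,n≥0} T₁^m T₂ⁿ(E)` where `E = ker T₁* ∩ ker T₂*`. -/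
theorem doublyCommuting_analytic_twoIsometries_wandering_subspace_property
    {H : Type*} [NormedAddCommGroup H] [InnerProductSpace ℂ H] [CompleteSpace H]
    (T₁ T₂ : H →L[ℂ] H)
    (h2iso₁ : ∀ h : H, ‖T₁ (T₁ h)‖ ^ 2 - 2 * ‖T₁ h‖ ^ 2 + ‖h‖ ^ 2 = 0)
    (h2iso₂ : ∀ h : H, ‖T₂ (T₂ h)‖ ^ 2 - 2 * ‖T₂ h‖ ^ 2 + ‖h‖ ^ 2 = 0)
    (hana₁ : (⨅ n : ℕ, LinearMap.range ((T₁ ^ n : H →L[ℂ] H) : H →ₗ[ℂ] H)) = ⊥)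
    (hana₂ : (⨅ n : ℕ, LinearMap.range ((T₂ ^ n : H →L[ℂ] H) : H →ₗ[ℂ] H)) = ⊥)
    (hcomm : T₁ ∘L T₂ = T₂ ∘L T₁)
    (hdcomm : T₁ ∘L adjoint T₂ = adjoint T₂ ∘L T₁) :
    (⨆ p : ℕ × ℕ,
        (LinearMap.ker ((adjoint T₁ : H →L[ℂ] H) : H →ₗ[ℂ] H) ⊓
          LinearMap.ker ((adjoint T₂ : H →L[ℂ] H) : H →ₗ[ℂ] H)).map
          (((T₁ ^ p.1) ∘L (T₂ ^ p.2) : H →L[ℂ] H) : H →ₗ[ℂ] H)).topologicalClosure = ⊤ := by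
  have hT₁ : ∀ x ∈ (adjoint T₂).ker, T₁ x ∈ (adjoint T₂).ker := fun x hx => by
    simp only [LinearMap.mem_ker, coe_coe] at hx ⊢
    rw [← comp_apply, ← hdcomm, comp_apply, hx, map_zero]
  have hT₁' : ∀ x ∈ (adjoint T₂).ker, adjoint T₁ x ∈ (adjoint T₂).ker := fun x hx => by
    simp only [LinearMap.mem_ker, coe_coe] at hx ⊢
    rw [← comp_apply, ← adjoint_comp, hcomm, adjoint_comp, comp_apply, hx, map_zero]
  have hker₂ := IsTwoIsometry.le_topologicalClosure_iSup_map_pow_ker_adjoint_inf h2iso₁ hana₁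
    (adjoint T₂).isClosed_ker hT₁ hT₁'
  rw [eq_top_iff, ← IsTwoIsometry.topologicalClosure_iSup_map_pow_ker_adjoint_eq_top h2iso₂ hana₂]
  refine Submodule.topologicalClosure_minimal _ (iSup_le fun n => ?_)
    (Submodule.isClosed_topologicalClosure _)
  refine (Submodule.map_mono hker₂).trans <|
    (Submodule.topologicalClosure_map _ _).trans (Submodule.topologicalClosure_mono ?_)
  rw [Submodule.map_iSup]
  refine iSup_le fun m => ?_
  have hcomm_pow : (T₂ ^ n) ∘L (T₁ ^ m) = (T₁ ^ m) ∘L (T₂ ^ n) :=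
    ((show Commute T₁ T₂ from hcomm).pow_pow m n).symm.eq
  rw [← Submodule.map_comp, ← toLinearMap_comp, hcomm_pow]
  exact le_iSup_of_le (m, n) le_rfl
end
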